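/- arXiv:1302.4677 — 7 statements merged into one kernel-verified Lean document; each statement's English description precedes it below -/
import Mathlib

section
/- Let T be a tournament whose edges are colored with k colors such that each color class is a transitive digraph. For each subset I of [k], let T_I be the scrambling of T obtained by reversing all edges of colors in I, and let S_I be a dominating set of T_I. Then R = ∪_{I⊆[k]} S_I is an enclosure set of T: for every vertex v not in R there exist a color i and vertices a,c in R with edges av and vc both of color i. -/
/-! The scrambling to look at for a vertex `v ∉ R` is `T_I` with `I` the set of colours of the
edges entering `v` from `R`. A vertex `w ∈ S_I ⊆ R` dominating `v` in `T_I` cannot be an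
in-neighbour of `v` in `T` with colour outside `I`, by the choice of `I`; so `vw` is an edge of
some colour `i ∈ I`, and some `a ∈ R` has `av` of colour `i` as well. -/

section Enclosure

variable {V : Type*} {k : ℕ} (T : V → V → Prop) (col : V → V → Fin k)

open Classical in
noncomputable def inColors (R : Finset V) (v : V) : Finset (Fin k) :=
  Finset.univ.filter fun i => ∃ a ∈ R, T a v ∧ col a v = i

theorem mem_inColors {R : Finset V} {v : V} {i : Fin k} :
    i ∈ inColors T col R v ↔ ∃ a ∈ R, T a v ∧ col a v = i := by
  simp [inColors]

theorem exists_between_of_dominates_in_inColors (hsymcol : ∀ x y, col x y = col y x)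
    {R : Finset V} {v w : V} (hwR : w ∈ R)
    (hdom : (col w v ∈ inColors T col R v ∧ T v w) ∨ (col w v ∉ inColors T col R v ∧ T w v)) :
    ∃ (i : Fin k) (a c : V), a ∈ R ∧ c ∈ R ∧ T a v ∧ T v c ∧ col a v = i ∧ col v c = i := by
  rcases hdom with ⟨hwI, hTvw⟩ | ⟨hwI, hTwv⟩
  · obtain ⟨a, haR, hTav, hcol⟩ := (mem_inColors T col).mp hwI
    exact ⟨col w v, a, w, haR, hwR, hTav, hTvw, hcol, hsymcol v w⟩
  · exact absurd ((mem_inColors T col).mpr ⟨w, hwR, hTwv, rfl⟩) hwI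

end Enclosure

theorem stmt2_general {V : Type*} [DecidableEq V] (k : ℕ)
    (T : V → V → Prop)
    (col : V → V → Fin k)
    (hsymcol : ∀ x y, col x y = col y x)
    (S : Finset (Fin k) → Finset V)
    (hdom : ∀ I : Finset (Fin k), ∀ v ∉ S I, ∃ w ∈ S I,
      (col w v ∈ I ∧ T v w) ∨ (col w v ∉ I ∧ T w v))
    (R : Finset V) (hR : R = Finset.univ.biUnion S) :
    ∀ v ∉ R, ∃ (i : Fin k) (a c : V), a ∈ R ∧ c ∈ R ∧
      T a v ∧ T v c ∧ col a v = i ∧ col v c = i := by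
  intro v hv
  have hSR : ∀ I, S I ⊆ R := fun I => hR ▸ Finset.subset_biUnion_of_mem S (Finset.mem_univ I)
  obtain ⟨w, hwS, hw⟩ := hdom (inColors T col R v) v fun hvS => hv (hSR _ hvS)
  exact exists_between_of_dominates_in_inColors T col hsymcol (hSR _ hwS) hw

/-- If `S I` is a dominating set of the scrambling `T_I` of a transitively
`k`-colored tournament `T` for each `I ⊆ [k]`, then the union of all `S I`
is an enclosure set of `T`. -/
theorem stmt2 {V : Type*} [Fintype V] [DecidableEq V] (k : ℕ)
    (T : V → V → Prop)
    (hirr : ∀ v, ¬ T v v)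
    (htot : ∀ x y, x ≠ y → T x y ∨ T y x)
    (hasym : ∀ x y, T x y → ¬ T y x)
    (col : V → V → Fin k)
    (hsymcol : ∀ x y, col x y = col y x)
    (htrans : ∀ a b c, T a b → T b c → col a b = col b c →
      T a c ∧ col a c = col a b)
    (S : Finset (Fin k) → Finset V)
    (hdom : ∀ I : Finset (Fin k), ∀ v ∉ S I, ∃ w ∈ S I,
      (col w v ∈ I ∧ T v w) ∨ (col w v ∉ I ∧ T w v))
    (R : Finset V) (hR : R = Finset.univ.biUnion S) :
    ∀ v ∉ R, ∃ (i : Fin k) (a c : V), a ∈ R ∧ c ∈ R ∧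
      T a v ∧ T v c ∧ col a v = i ∧ col v c = i :=
  stmt2_general k T col hsymcol S hdom R hR
end

section
/- If every k-transitive tournament has a dominating set of size at most p, then every k-transitive tournament has an enclosure set of size at most 2^k · p. -/
/-!
For each set `I` of colours, reversing the edges whose colour lies in `I` gives again a
`k`-transitive tournament, which by hypothesis has a dominating set `S_I` of size `≤ p`.
The union of the `2^k` sets `S_I` is an enclosure set: for `v` outside it, let `I` be the
colours of the edges entering `v` from the union. Some `w ∈ S_I` dominates `v` in the
scrambled tournament; the edge `wv` cannot keep its direction (its colour would then be in
`I`), so it is a reversed edge `vw` whose colour `i ∈ I` is also the colour of some edge `av`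
with `a` in the union, and `a → v → w` is monochromatic.
-/

namespace Tournament

variable {V ι : Type*} (T : V → V → Prop) (col : V → V → ι)

def scramble [DecidableEq ι] (I : Finset ι) (x y : V) : Prop :=
  if col x y ∈ I then T y x else T x y

variable {T col} [DecidableEq ι] (I : Finset ι)

theorem scramble_irrefl (hirr : ∀ v, ¬ T v v) (v : V) : ¬ scramble T col I v v := by
  unfold scramble
  split_ifs <;> exact hirr v

theorem scramble_total (hsym : ∀ x y, col x y = col y x)
    (htot : ∀ x y, x ≠ y → T x y ∨ T y x) (x y : V) (hxy : x ≠ y) :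
    scramble T col I x y ∨ scramble T col I y x := by
  unfold scramble
  rw [hsym y x]
  split_ifs
  · exact (htot x y hxy).symm
  · exact htot x y hxy

theorem scramble_asymm (hsym : ∀ x y, col x y = col y x)
    (hasym : ∀ x y, T x y → ¬ T y x) (x y : V) :
    scramble T col I x y → ¬ scramble T col I y x := by
  unfold scramble
  rw [hsym y x]
  split_ifs
  · exact hasym y x
  · exact hasym x y

theorem scramble_colorTransitive (hsym : ∀ x y, col x y = col y x)
    (htr : ∀ a b c, T a b → T b c → col a b = col b c → T a c ∧ col a c = col a b)
    (a b c : V) (hab : scramble T col I a b) (hbc : scramble T col I b c)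
    (hcol : col a b = col b c) : scramble T col I a c ∧ col a c = col a b := by
  unfold scramble at hab hbc ⊢
  by_cases hI : col a b ∈ I
  · rw [if_pos hI] at hab
    rw [if_pos (hcol ▸ hI)] at hbc
    obtain ⟨hca, hcolca⟩ := htr c b a hbc hab (by rw [hsym c b, hsym b a, hcol])
    have hac : col a c = col a b := by rw [hsym a c, hcolca, hsym c b, hcol]
    rw [if_pos (hac ▸ hI)]
    exact ⟨hca, hac⟩
  · rw [if_neg hI] at hab
    rw [if_neg (hcol ▸ hI)] at hbc
    obtain ⟨hac, hcolac⟩ := htr a b c hab hbc hcol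
    rw [if_neg (hcolac ▸ hI)]
    exact ⟨hac, hcolac⟩

theorem encloses_of_dominates_scramble [Fintype ι] [DecidableEq V]
    (hsym : ∀ x y, col x y = col y x)
    (S : Finset ι → Finset V) (hS : ∀ I, ∀ v ∉ S I, ∃ w ∈ S I, scramble T col I w v) :
    ∀ v ∉ Finset.univ.biUnion S, ∃ (i : ι) (a c : V), a ∈ Finset.univ.biUnion S ∧
      c ∈ Finset.univ.biUnion S ∧ T a v ∧ T v c ∧ col a v = i ∧ col v c = i := by
  classical
  intro v hv
  set U := Finset.univ.biUnion S
  let I : Finset ι := Finset.univ.filter fun i => ∃ a ∈ U, T a v ∧ col a v = i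
  have hSU : S I ⊆ U := Finset.subset_biUnion_of_mem S (Finset.mem_univ I)
  obtain ⟨w, hw, hwv⟩ := hS I v fun h => hv (hSU h)
  unfold scramble at hwv
  split_ifs at hwv with hwI
  · obtain ⟨a, ha, hav, hcol⟩ := (Finset.mem_filter.1 hwI).2
    exact ⟨col w v, a, w, ha, hSU hw, hav, hwv, hcol, hsym v w⟩
  · exact absurd (Finset.mem_filter.2 ⟨Finset.mem_univ _, w, hSU hw, hwv, rfl⟩) hwI

end Tournament

open Tournament in
/-- If every `k`-transitive tournament has a dominating set of size at most `p`,
then every `k`-transitive tournament has an enclosure set of size at most `2^k * p`. -/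
theorem stmt3 (k p : ℕ)
    (Hdom : ∀ (V : Type) [Fintype V] [DecidableEq V] (T : V → V → Prop),
      (∀ v, ¬ T v v) → (∀ x y, x ≠ y → T x y ∨ T y x) →
      (∀ x y, T x y → ¬ T y x) →
      ∀ col : V → V → Fin k, (∀ x y, col x y = col y x) →
      (∀ a b c, T a b → T b c → col a b = col b c → T a c ∧ col a c = col a b) →
      ∃ S : Finset V, S.card ≤ p ∧ ∀ v ∉ S, ∃ w ∈ S, T w v) :
    ∀ (V : Type) [Fintype V] [DecidableEq V] (T : V → V → Prop),
      (∀ v, ¬ T v v) → (∀ x y, x ≠ y → T x y ∨ T y x) →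
      (∀ x y, T x y → ¬ T y x) →
      ∀ col : V → V → Fin k, (∀ x y, col x y = col y x) →
      (∀ a b c, T a b → T b c → col a b = col b c → T a c ∧ col a c = col a b) →
      ∃ S : Finset V, S.card ≤ 2 ^ k * p ∧ ∀ v ∉ S, ∃ (i : Fin k) (a c : V),
        a ∈ S ∧ c ∈ S ∧ T a v ∧ T v c ∧ col a v = i ∧ col v c = i := by
  intro V _ _ T hirr htot hasym col hsym htr
  have hdom (I : Finset (Fin k)) :
      ∃ S : Finset V, S.card ≤ p ∧ ∀ v ∉ S, ∃ w ∈ S, scramble T col I w v :=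
    Hdom V (scramble T col I) (scramble_irrefl I hirr) (scramble_total I hsym htot)
      (scramble_asymm I hsym hasym) col hsym (scramble_colorTransitive I hsym htr)
  choose S hS_card hS_dom using hdom
  refine ⟨Finset.univ.biUnion S, ?_, encloses_of_dominates_scramble hsym S hS_dom⟩
  calc (Finset.univ.biUnion S).card ≤ Finset.univ.card * p :=
        Finset.card_biUnion_le_card_mul _ _ _ fun I _ => hS_card I
    _ = 2 ^ k * p := by simp [Finset.card_univ, Fintype.card_finset]
end

section
/- For any finite tournament T, the fractional transversal number of the hypergraph H(T) of closed in-neighborhoods is strictly less than 2. Equivalently, if x is a nonnegative vector indexed by the vertices of T such that for every vertex v the sum of x over the closed in-neighborhood of v is at most 1, then the total sum of x is less than 2. -/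
/-!
Let `S = ∑ x` and `N[v]` the closed in-neighbourhood of `v`. Weighting the constraint at `v`
by `x v` and summing gives `∑_v x v · x(N[v]) ≤ S`. Since every ordered pair `(u, v)` with
`u ≠ v` has `u ∈ N[v]` or `v ∈ N[u]`, and every diagonal pair satisfies both, the left side is at
least `(S² + ∑ x²) / 2` (here `x ≥ 0` is used). Hence `S² + ∑ x² ≤ 2 S`; if `S ≥ 2` this gives
`∑ x² ≤ S (2 - S) ≤ 0`, so `x = 0`, contradicting `S ≥ 2`.
-/

open Finset

section

variable {V : Type*} [Fintype V]

theorem sq_sum_add_sum_sq_le_two_mul_sum_rel [DecidableEq V] (R : V → V → Prop) [DecidableRel R]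
    (hR : ∀ u v, R u v ∨ R v u) (x : V → ℝ) (hx : ∀ v, 0 ≤ x v) :
    (∑ v, x v) ^ 2 + ∑ v, x v ^ 2 ≤ 2 * ∑ v, x v * ∑ u ∈ univ.filter (R · v), x u := by
  have hcount : ∀ u v, (1 : ℝ) + (if u = v then 1 else 0)
      ≤ (if R u v then 1 else 0) + (if R v u then 1 else 0) := by
    intro u v
    by_cases huv : u = v
    · subst huv
      have := (hR u u).elim id id
      simp [this]
    · rcases hR u v with h | h <;> split_ifs <;> simp_all
  calc (∑ v, x v) ^ 2 + ∑ v, x v ^ 2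
      = ∑ u, ∑ v, x u * x v * (1 + if u = v then 1 else 0) := by
        simp only [mul_add, mul_one, mul_ite, mul_zero, sum_add_distrib, sum_ite_eq, mem_univ,
          if_true, sq, sum_mul_sum]
    _ ≤ ∑ u, ∑ v, x u * x v * ((if R u v then 1 else 0) + (if R v u then 1 else 0)) := by
        refine sum_le_sum fun u _ => sum_le_sum fun v _ => ?_
        exact mul_le_mul_of_nonneg_left (hcount u v) (mul_nonneg (hx u) (hx v))
    _ = 2 * ∑ u, ∑ v, if R u v then x u * x v else 0 := by
        simp only [mul_add, mul_ite, mul_one, mul_zero, sum_add_distrib]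
        rw [sum_comm (f := fun u v => if R v u then x u * x v else 0)]
        simp only [mul_comm (x _) (x _)]
        ring
    _ = 2 * ∑ v, x v * ∑ u ∈ univ.filter (R · v), x u := by
        rw [sum_comm]
        simp only [mul_sum, sum_filter, mul_ite, mul_zero, mul_comm (x _) (x _)]

theorem sum_lt_two_of_sq_sum_add_sum_sq_le (x : V → ℝ)
    (h : (∑ v, x v) ^ 2 + ∑ v, x v ^ 2 ≤ 2 * ∑ v, x v) : ∑ v, x v < 2 := by
  by_contra! hS
  have hsq : ∑ v, x v ^ 2 = 0 :=
    le_antisymm (by nlinarith) (sum_nonneg fun v _ => sq_nonneg (x v))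
  have hzero : ∀ v, x v = 0 := fun v =>
    pow_eq_zero_iff two_ne_zero |>.mp <|
      (sum_eq_zero_iff_of_nonneg fun v _ => sq_nonneg (x v)).mp hsq v (mem_univ v)
  simp only [hzero, sum_const_zero] at hS
  norm_num at hS

theorem sum_lt_two_of_total_of_sum_filter_le_one [DecidableEq V] (R : V → V → Prop)
    [DecidableRel R] (hR : ∀ u v, R u v ∨ R v u) (x : V → ℝ) (hx : ∀ v, 0 ≤ x v)
    (hle : ∀ v, ∑ u ∈ univ.filter (R · v), x u ≤ 1) : ∑ v, x v < 2 := by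
  refine sum_lt_two_of_sq_sum_add_sum_sq_le x ?_
  calc (∑ v, x v) ^ 2 + ∑ v, x v ^ 2
      ≤ 2 * ∑ v, x v * ∑ u ∈ univ.filter (R · v), x u :=
        sq_sum_add_sum_sq_le_two_mul_sum_rel R hR x hx
    _ ≤ 2 * ∑ v, x v * 1 := by
        gcongr with v
        exacts [hx v, hle v]
    _ = 2 * ∑ v, x v := by simp only [mul_one]

end

theorem stmt4_general {V : Type*} [Fintype V] [DecidableEq V]
    (T : V → V → Prop) [DecidableRel T]
    (htot : ∀ x y, x ≠ y → T x y ∨ T y x)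
    (x : V → ℝ) (hx : ∀ v, 0 ≤ x v)
    (hle : ∀ v : V, ∑ u ∈ Finset.univ.filter (fun u => u = v ∨ T u v), x u ≤ 1) :
    ∑ v, x v < 2 := by
  have hclosed : ∀ u v, (u = v ∨ T u v) ∨ (v = u ∨ T v u) := fun u v => by
    by_cases huv : u = v
    · exact .inl (.inl huv)
    · rcases htot u v huv with h | h
      exacts [.inl (.inr h), .inr (.inr h)]
  exact sum_lt_two_of_total_of_sum_filter_le_one (fun u v => u = v ∨ T u v) hclosed x hx hle

/-- The fractional transversal number of the closed in-neighborhood hypergraph of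
any finite tournament is strictly less than 2. -/
theorem stmt4 {V : Type*} [Fintype V] [DecidableEq V]
    (T : V → V → Prop) [DecidableRel T]
    (hirr : ∀ v, ¬ T v v)
    (htot : ∀ x y, x ≠ y → T x y ∨ T y x)
    (hasym : ∀ x y, T x y → ¬ T y x)
    (x : V → ℝ) (hx : ∀ v, 0 ≤ x v)
    (hle : ∀ v : V, ∑ u ∈ Finset.univ.filter (fun u => u = v ∨ T u v), x u ≤ 1) :
    ∑ v, x v < 2 :=
  stmt4_general T htot x hx hle
end

section
/- For every d ≥ 1 there exist 2^{2^{d-1}} points in ℝ^d such that no point of the set lies in the axis-parallel box spanned by two other points of the set. -/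
private lemma step_lt8 {B M a b u v : ℤ} (hM : M = 2*B+1) (ha : a < b)
    (hu : |u| ≤ B) (hv : |v| ≤ B) : M*a + u < M*b + v := by
  have hB : 0 ≤ B := le_trans (abs_nonneg u) hu
  have h1 : a + 1 ≤ b := ha
  have h2 : M * (a+1) ≤ M * b := mul_le_mul_of_nonneg_left h1 (by linarith)
  have h3 := abs_le.mp hu
  have h4 := abs_le.mp hv
  nlinarith

private def Fcons8 {n : ℕ} (M : ℤ) (p q : Fin (n+1) → ℤ) : Fin (n+2) → ℤ :=
  Fin.snoc (fun t => M * p t + q t) (M * p 0 - q 0)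

private lemma Fcons8_castSucc {n : ℕ} (M : ℤ) (p q : Fin (n+1) → ℤ) (t : Fin (n+1)) :
    Fcons8 M p q (Fin.castSucc t) = M * p t + q t := by
  simp [Fcons8]

private lemma Fcons8_last {n : ℕ} (M : ℤ) (p q : Fin (n+1) → ℤ) :
    Fcons8 M p q (Fin.last (n+1)) = M * p 0 - q 0 := by
  simp [Fcons8]

private lemma Fcons8_zero {n : ℕ} (M : ℤ) (p q : Fin (n+1) → ℤ) :
    Fcons8 M p q 0 = M * p 0 + q 0 := by
  have : (0 : Fin (n+2)) = Fin.castSucc (0 : Fin (n+1)) := rfl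
  rw [this, Fcons8_castSucc]

private lemma key8 (k : ℕ) : ∃ P : Finset (Fin (k+1) → ℤ),
    P.card = 2 ^ 2 ^ k ∧
    (∀ p ∈ P, ∀ q ∈ P, p 0 = q 0 → p = q) ∧
    (∀ x ∈ P, ∀ p ∈ P, ∀ q ∈ P, x ≠ p → x ≠ q → p ≠ q →
      ∃ t, x t < min (p t) (q t) ∨ max (p t) (q t) < x t) := by
  induction k with
  | zero =>
    refine ⟨{fun _ => 0, fun _ => 1}, ?_, ?_, ?_⟩
    · have hne : (fun _ => (0:ℤ) : Fin 1 → ℤ) ≠ fun _ => 1 := by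
        intro h; simpa using congrFun h 0
      simp [hne]
    · intro p _ q _ h
      funext i
      have hi : i = 0 := Fin.eq_zero i
      rw [hi]; exact h
    · intro x hx p hp q hq hxp hxq hpq
      simp only [Finset.mem_insert, Finset.mem_singleton] at hx hp hq
      rcases hx with rfl|rfl <;> rcases hp with rfl|rfl <;> rcases hq with rfl|rfl <;>
        simp_all
  | succ k ih =>
    obtain ⟨P, hcard, hinj, hgood⟩ := ih
    obtain ⟨B, hBpos, hbound⟩ : ∃ B : ℤ, 0 ≤ B ∧ ∀ p ∈ P, ∀ t, |p t| ≤ B := by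
      refine ⟨((P.sup fun p => Finset.univ.sup fun t => (p t).natAbs : ℕ) : ℤ),
        Int.natCast_nonneg _, ?_⟩
      intro p hp t
      have h1 : (p t).natAbs ≤ P.sup fun p => Finset.univ.sup fun t => (p t).natAbs :=
        le_trans (Finset.le_sup (f := fun t => (p t).natAbs) (Finset.mem_univ t))
          (Finset.le_sup (f := fun p => Finset.univ.sup fun t => (p t).natAbs) hp)
      have h2 : |p t| = ((p t).natAbs : ℤ) := Int.abs_eq_natAbs _
      rw [h2]
      exact_mod_cast h1
    obtain ⟨M, hM⟩ : ∃ M : ℤ, M = 2*B + 1 := ⟨2*B+1, rfl⟩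
    have hMpos : 0 < M := by omega
    have hne0 : ∀ u ∈ P, ∀ v ∈ P, u ≠ v → u 0 ≠ v 0 :=
      fun u hu v hv huv h => huv (hinj u hu v hv h)
    have hnegb : ∀ p ∈ P, ∀ t, |(-(p t))| ≤ B := by
      intro p hp t; rw [abs_neg]; exact hbound p hp t
    -- key injectivity on coordinate 0
    have hkey0 : ∀ p ∈ P, ∀ q ∈ P, ∀ p' ∈ P, ∀ q' ∈ P,
        M * p 0 + q 0 = M * p' 0 + q' 0 → p = p' ∧ q = q' := by
      intro p hp q hq p' hp' q' hq' h0
      have hpp : p 0 = p' 0 := by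
        rcases lt_trichotomy (p 0) (p' 0) with hlt|heq|hlt
        · exact absurd h0 (ne_of_lt (step_lt8 hM hlt (hbound q hq 0) (hbound q' hq' 0)))
        · exact heq
        · exact absurd h0 (ne_of_gt (step_lt8 hM hlt (hbound q' hq' 0) (hbound q hq 0)))
      have hp2 : p = p' := hinj p hp p' hp' hpp
      subst hp2
      have hq0 : q 0 = q' 0 := by
        rw [hpp] at h0; linarith
      exact ⟨rfl, hinj q hq q' hq' hq0⟩
    have hinjOn : Set.InjOn (fun pq : (Fin (k+1) → ℤ) × (Fin (k+1) → ℤ) =>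
        Fcons8 M pq.1 pq.2) ↑(P ×ˢ P) := by
      intro x hx y hy hxy
      simp only [Finset.coe_product, Set.mem_prod, Finset.mem_coe] at hx hy
      have h0 : M * x.1 0 + x.2 0 = M * y.1 0 + y.2 0 := by
        have := congrArg (fun f => f (0 : Fin (k+2))) hxy
        simpa [Fcons8_zero] using this
      obtain ⟨h1, h2⟩ := hkey0 x.1 hx.1 x.2 hx.2 y.1 hy.1 y.2 hy.2 h0
      exact Prod.ext h1 h2
    refine ⟨(P ×ˢ P).image (fun pq => Fcons8 M pq.1 pq.2), ?_, ?_, ?_⟩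
    · rw [Finset.card_image_of_injOn hinjOn, Finset.card_product, hcard, ← pow_add]
      congr 1
      rw [pow_succ]
      omega
    · intro x hx y hy h0
      simp only [Finset.mem_image, Finset.mem_product] at hx hy
      obtain ⟨⟨p, q⟩, ⟨hp, hq⟩, rfl⟩ := hx
      obtain ⟨⟨p', q'⟩, ⟨hp', hq'⟩, rfl⟩ := hy
      simp only [Fcons8_zero] at h0
      obtain ⟨h1, h2⟩ := hkey0 p hp q hq p' hp' q' hq' h0
      rw [h1, h2]
    · intro x hx p hp q hq hxp hxq hpq
      simp only [Finset.mem_image, Finset.mem_product] at hx hp hq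
      obtain ⟨⟨a, b⟩, ⟨ha, hb⟩, rfl⟩ := hx
      obtain ⟨⟨c, e⟩, ⟨hc, he⟩, rfl⟩ := hp
      obtain ⟨⟨f, g⟩, ⟨hf, hg⟩, rfl⟩ := hq
      simp only at hxp hxq hpq ⊢
      by_cases hcf : c = f
      · subst hcf
        have heg : e ≠ g := fun h => hpq (by rw [h])
        by_cases hac : a = c
        · subst hac
          have hbe : b ≠ e := fun h => hxp (by rw [h])
          have hbg : b ≠ g := fun h => hxq (by rw [h])
          obtain ⟨t, ht⟩ := hgood b hb e he g hg hbe hbg heg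
          refine ⟨Fin.castSucc t, ?_⟩
          rw [Fcons8_castSucc, Fcons8_castSucc, Fcons8_castSucc]
          rcases ht with ht|ht
          · left; rw [lt_min_iff] at ht ⊢
            exact ⟨by linarith [ht.1], by linarith [ht.2]⟩
          · right; rw [max_lt_iff] at ht ⊢
            exact ⟨by linarith [ht.1], by linarith [ht.2]⟩
        · have h0 : a 0 ≠ c 0 := hne0 a ha c hc hac
          rcases h0.lt_or_gt with hlt|hlt
          · refine ⟨Fin.castSucc 0, Or.inl ?_⟩
            rw [Fcons8_castSucc, Fcons8_castSucc, Fcons8_castSucc, lt_min_iff]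
            exact ⟨step_lt8 hM hlt (hbound b hb 0) (hbound e he 0),
                   step_lt8 hM hlt (hbound b hb 0) (hbound g hg 0)⟩
          · refine ⟨Fin.castSucc 0, Or.inr ?_⟩
            rw [Fcons8_castSucc, Fcons8_castSucc, Fcons8_castSucc, max_lt_iff]
            exact ⟨step_lt8 hM hlt (hbound e he 0) (hbound b hb 0),
                   step_lt8 hM hlt (hbound g hg 0) (hbound b hb 0)⟩
      · by_cases hac : a = c
        · subst hac
          have hbe : b ≠ e := fun h => hxp (by rw [h])
          have haf0 : a 0 ≠ f 0 := hne0 a ha f hf hcf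
          have hbe0 : b 0 ≠ e 0 := hne0 b hb e he hbe
          rcases haf0.lt_or_gt with h1|h1 <;> rcases hbe0.lt_or_gt with h2|h2
          · refine ⟨Fin.castSucc 0, Or.inl ?_⟩
            rw [Fcons8_castSucc, Fcons8_castSucc, Fcons8_castSucc, lt_min_iff]
            exact ⟨by linarith, step_lt8 hM h1 (hbound b hb 0) (hbound g hg 0)⟩
          · refine ⟨Fin.last _, Or.inl ?_⟩
            rw [Fcons8_last, Fcons8_last, Fcons8_last, lt_min_iff]
            have h3 := step_lt8 hM h1 (hnegb b hb 0) (hnegb g hg 0)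
            exact ⟨by linarith, by linarith⟩
          · refine ⟨Fin.last _, Or.inr ?_⟩
            rw [Fcons8_last, Fcons8_last, Fcons8_last, max_lt_iff]
            have h3 := step_lt8 hM h1 (hnegb g hg 0) (hnegb b hb 0)
            exact ⟨by linarith, by linarith⟩
          · refine ⟨Fin.castSucc 0, Or.inr ?_⟩
            rw [Fcons8_castSucc, Fcons8_castSucc, Fcons8_castSucc, max_lt_iff]
            exact ⟨by linarith, step_lt8 hM h1 (hbound g hg 0) (hbound b hb 0)⟩
        · by_cases haf : a = f
          · subst haf
            have hbg : b ≠ g := fun h => hxq (by rw [h])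
            have hac0 : a 0 ≠ c 0 := hne0 a ha c hc hac
            have hbg0 : b 0 ≠ g 0 := hne0 b hb g hg hbg
            rcases hac0.lt_or_gt with h1|h1 <;> rcases hbg0.lt_or_gt with h2|h2
            · refine ⟨Fin.castSucc 0, Or.inl ?_⟩
              rw [Fcons8_castSucc, Fcons8_castSucc, Fcons8_castSucc, lt_min_iff]
              exact ⟨step_lt8 hM h1 (hbound b hb 0) (hbound e he 0), by linarith⟩
            · refine ⟨Fin.last _, Or.inl ?_⟩
              rw [Fcons8_last, Fcons8_last, Fcons8_last, lt_min_iff]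
              have h3 := step_lt8 hM h1 (hnegb b hb 0) (hnegb e he 0)
              exact ⟨by linarith, by linarith⟩
            · refine ⟨Fin.last _, Or.inr ?_⟩
              rw [Fcons8_last, Fcons8_last, Fcons8_last, max_lt_iff]
              have h3 := step_lt8 hM h1 (hnegb e he 0) (hnegb b hb 0)
              exact ⟨by linarith, by linarith⟩
            · refine ⟨Fin.castSucc 0, Or.inr ?_⟩
              rw [Fcons8_castSucc, Fcons8_castSucc, Fcons8_castSucc, max_lt_iff]
              exact ⟨step_lt8 hM h1 (hbound e he 0) (hbound b hb 0), by linarith⟩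
          · obtain ⟨t, ht⟩ := hgood a ha c hc f hf hac haf hcf
            refine ⟨Fin.castSucc t, ?_⟩
            rw [Fcons8_castSucc, Fcons8_castSucc, Fcons8_castSucc]
            rcases ht with ht|ht
            · left; rw [lt_min_iff] at ht ⊢
              exact ⟨step_lt8 hM ht.1 (hbound b hb t) (hbound e he t),
                     step_lt8 hM ht.2 (hbound b hb t) (hbound g hg t)⟩
            · right; rw [max_lt_iff] at ht ⊢
              exact ⟨step_lt8 hM ht.1 (hbound e he t) (hbound b hb t),
                     step_lt8 hM ht.2 (hbound g hg t) (hbound b hb t)⟩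

/-- For every `d ≥ 1` there exist `2^(2^(d-1))` points in `ℝ^d` such that no point
of the set lies in the box spanned by two other points of the set. -/
theorem stmt8 (d : ℕ) (hd : 1 ≤ d) :
    ∃ P : Finset (Fin d → ℝ), P.card = 2 ^ 2 ^ (d - 1) ∧
      ∀ x ∈ P, ∀ p ∈ P, ∀ q ∈ P, x ≠ p → x ≠ q → p ≠ q →
        ¬ ∀ i, min (p i) (q i) ≤ x i ∧ x i ≤ max (p i) (q i) := by
  obtain ⟨k, rfl⟩ : ∃ k, d = k + 1 := ⟨d - 1, by omega⟩
  obtain ⟨P, hcard, hinj, hgood⟩ := key8 k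
  have hmapinj : Function.Injective (fun (p : Fin (k+1) → ℤ) (i : Fin (k+1)) => ((p i : ℝ))) := by
    intro p q h
    funext i
    have h2 : ((p i : ℝ)) = ((q i : ℝ)) := congrFun h i
    exact_mod_cast h2
  refine ⟨P.image (fun p i => ((p i : ℝ))), ?_, ?_⟩
  · rw [Finset.card_image_of_injective _ hmapinj, hcard]
    norm_num
  · intro x hx p hp q hq hxp hxq hpq hall
    simp only [Finset.mem_image] at hx hp hq
    obtain ⟨x', hx', rfl⟩ := hx
    obtain ⟨p', hp', rfl⟩ := hp
    obtain ⟨q', hq', rfl⟩ := hq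
    have hxp' : x' ≠ p' := fun h => hxp (by rw [h])
    have hxq' : x' ≠ q' := fun h => hxq (by rw [h])
    have hpq' : p' ≠ q' := fun h => hpq (by rw [h])
    obtain ⟨t, ht⟩ := hgood x' hx' p' hp' q' hq' hxp' hxq' hpq'
    have h := hall t
    simp only at h
    rcases ht with ht|ht
    · rw [lt_min_iff] at ht
      have h1 : (x' t : ℝ) < (p' t : ℝ) := by exact_mod_cast ht.1
      have h2 : (x' t : ℝ) < (q' t : ℝ) := by exact_mod_cast ht.2
      rcases min_le_iff.mp h.1 with h'|h' <;> linarith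
    · rw [max_lt_iff] at ht
      have h1 : (p' t : ℝ) < (x' t : ℝ) := by exact_mod_cast ht.1
      have h2 : (q' t : ℝ) < (x' t : ℝ) := by exact_mod_cast ht.2
      rcases le_max_iff.mp h.2 with h'|h' <;> linarith
end

section
/- Let q be a prime power with q ≡ 3 (mod 4) and q > 2^{4k+2}. Then the Paley tournament PT_q (vertices GF(q), x → y iff y − x is a nonzero square) admits no transitive k-coloring of its edges. -/
/-!
For a colour `c` and a vertex `v`, transitivity of colour `c` forces every arc between the
colour-`c` in-neighbourhood and out-neighbourhood of `v` to point forward. In the Paley tournament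
the character-sum bound then gives `|A| |B| ≤ q` for such a pair, so the smaller of the two has
size at most `√q`. Sorting vertices by which of the two is smaller for each colour, some class `W`
has at least `q / 2^k` vertices. Within `W` every arc `u → v` of colour `c` is counted in the
smaller colour-`c` neighbourhood of `u` or of `v`, so `|W| ≤ 2k√q + 1`, which is incompatible with
`q > 2^(4k+2)`.
-/

open Finset

section QuadraticChar

variable {F : Type*} [Field F] [Fintype F] [DecidableEq F]

lemma quadraticChar_sum_mul_one_sub (hF : ringChar F ≠ 2) :
    ∑ y : F, quadraticChar F y * quadraticChar F (1 - y) = -quadraticChar F (-1) := by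
  have h := jacobiSum_nontrivial_inv (quadraticChar_ne_one hF)
  rwa [(quadraticChar_isQuadratic F).inv] at h

lemma quadraticChar_sum_sub_mul_sub (hF : ringChar F ≠ 2) (b b' : F) :
    ∑ x : F, quadraticChar F (b - x) * quadraticChar F (b' - x) =
      (if b = b' then (Fintype.card F : ℤ) else 0) - 1 := by
  split_ifs with hbb'
  · subst hbb'
    have hsq : ∀ y : F, quadraticChar F y * quadraticChar F y = if y = 0 then 0 else 1 := by
      intro y
      split_ifs with hy
      · simp [hy]
      · rw [← sq, quadraticChar_sq_one hy]
    rw [← (Equiv.subLeft b).sum_comp]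
    simp only [Equiv.subLeft_apply, sub_sub_cancel, hsq]
    simp [sum_ite, filter_ne', Nat.cast_sub Fintype.card_pos]
  · have hd : b - b' ≠ 0 := sub_ne_zero.mpr hbb'
    -- substituting `x = b - (b - b') y` turns the sum into `χ(-1) J(χ, χ)`
    rw [← ((Equiv.mulLeft₀ (b - b') hd).trans (Equiv.subLeft b)).sum_comp]
    calc ∑ y : F, quadraticChar F (b - (b - (b - b') * y)) * quadraticChar F (b' - (b - (b - b') * y))
        = ∑ y : F, quadraticChar F (-1) * (quadraticChar F (b - b') ^ 2 *
            (quadraticChar F y * quadraticChar F (1 - y))) := by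
          refine sum_congr rfl fun y _ => ?_
          rw [← map_pow, ← map_mul, ← map_mul, ← map_mul, ← map_mul]
          congr 1
          ring
      _ = -1 := by
          rw [quadraticChar_sq_one hd, ← mul_sum, ← mul_sum, one_mul, quadraticChar_sum_mul_one_sub hF, mul_neg, ← sq,
            quadraticChar_sq_one (neg_ne_zero.mpr one_ne_zero)]

lemma quadraticChar_sum_sq_sum_sub (hF : ringChar F ≠ 2) (B : Finset F) :
    ∑ x : F, (∑ b ∈ B, quadraticChar F (b - x)) ^ 2 =
      #B * (Fintype.card F : ℤ) - #B ^ 2 := by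
  simp_rw [sq, sum_mul_sum]
  rw [sum_comm]
  simp_rw [sum_comm (s := univ), quadraticChar_sum_sub_mul_sub hF, sum_sub_distrib, sum_ite_eq]
  simp

/-- The bound `|e(A,B) - e(B,A)| ≤ √(|A||B|q)` when every arc between `A` and `B` goes from `A`
to `B`. -/
theorem card_mul_card_le_of_quadraticChar_sub_eq_one (hF : ringChar F ≠ 2) {A B : Finset F}
    (h : ∀ a ∈ A, ∀ b ∈ B, quadraticChar F (b - a) = 1) : #A * #B ≤ Fintype.card F := by
  have hsum : ∑ a ∈ A, ∑ b ∈ B, quadraticChar F (b - a) = #A * #B := by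
    simp +contextual [h]
  have key : ((#A * #B : ℕ) : ℤ) ^ 2 ≤ (#A * #B : ℕ) * (Fintype.card F : ℤ) :=
    calc ((#A * #B : ℕ) : ℤ) ^ 2 = (∑ a ∈ A, ∑ b ∈ B, quadraticChar F (b - a)) ^ 2 := by
          rw [hsum]; push_cast; rfl
      _ ≤ #A * ∑ a ∈ A, (∑ b ∈ B, quadraticChar F (b - a)) ^ 2 := sq_sum_le_card_mul_sum_sq
      _ ≤ #A * ∑ x : F, (∑ b ∈ B, quadraticChar F (b - x)) ^ 2 := by
          gcongr
          exact subset_univ A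
      _ = #A * (#B * (Fintype.card F : ℤ) - #B ^ 2) := by rw [quadraticChar_sum_sq_sum_sub hF]
      _ ≤ (#A * #B : ℕ) * (Fintype.card F : ℤ) := by push_cast; nlinarith [sq_nonneg (#B : ℤ)]
  have : ((#A * #B : ℕ) : ℤ) ≤ Fintype.card F := by nlinarith
  exact_mod_cast this

end QuadraticChar

lemma Finset.card_le_two_mul_add_one_of_forall_mem_or_mem {V : Type*} [DecidableEq V]
    {W : Finset V} {N : V → Finset V} {m : ℕ} (hN : ∀ v ∈ W, #(N v) ≤ m)
    (hW : ∀ u ∈ W, ∀ v ∈ W, u ≠ v → u ∈ N v ∨ v ∈ N u) : #W ≤ 2 * m + 1 := by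
  set S := {p ∈ W.offDiag | p.1 ∈ N p.2}
  have hS : #S ≤ m * #W := by
    refine card_le_mul_card_image_of_maps_to (f := Prod.snd) (fun p hp => ?_) m fun v hv => ?_
    · exact (mem_offDiag.mp (mem_filter.mp hp).1).2.1
    · refine (card_le_card_of_injOn Prod.fst (fun p hp => ?_) fun p hp p' hp' h => ?_).trans
        (hN v hv)
      · simp only [coe_filter, Set.mem_ofPred_eq, S, mem_filter] at hp
        exact hp.2 ▸ hp.1.2
      · simp only [coe_filter, Set.mem_ofPred_eq, S, mem_filter] at hp hp'
        exact Prod.ext h (hp.2.trans hp'.2.symm)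
  have hcover : W.offDiag ⊆ S ∪ S.image Prod.swap := by
    rintro ⟨u, v⟩ huv
    obtain ⟨hu, hv, hne⟩ := mem_offDiag.mp huv
    rcases hW u hu v hv hne with h | h
    · exact mem_union_left _ (mem_filter.mpr ⟨huv, h⟩)
    · refine mem_union_right _ (mem_image.mpr ⟨(v, u), mem_filter.mpr ⟨?_, h⟩, rfl⟩)
      exact mem_offDiag.mpr ⟨hv, hu, hne.symm⟩
  have hoff : #W * (#W - 1) ≤ #W * (2 * m) := by
    calc #W * (#W - 1) = #W.offDiag := by rw [offDiag_card, Nat.mul_sub_one]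
      _ ≤ #S + #(S.image Prod.swap) := (card_le_card hcover).trans (card_union_le _ _)
      _ ≤ #W * (2 * m) := by linarith [card_image_le (s := S) (f := Prod.swap)]
  rcases W.eq_empty_or_nonempty with hW0 | hW0
  · simp [hW0]
  · have := Nat.le_of_mul_le_mul_left hoff hW0.card_pos
    omega

namespace Digraph

variable {V ι : Type*} (G : Digraph V)

def IsTransitiveColoring (col : V → V → ι) : Prop :=
  ∀ a b c, G.Adj a b → G.Adj b c → col a b = col b c → G.Adj a c ∧ col a c = col a b

variable [Fintype V] [DecidableRel G.Adj] [DecidableEq ι] (col : V → V → ι)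

def colorInNbhd (c : ι) (v : V) : Finset V := {u | G.Adj u v ∧ col u v = c}

def colorOutNbhd (c : ι) (v : V) : Finset V := {w | G.Adj v w ∧ col v w = c}

def smallerColorNbhd (c : ι) (v : V) : Finset V :=
  if #(G.colorInNbhd col c v) ≤ #(G.colorOutNbhd col c v) then G.colorInNbhd col c v
  else G.colorOutNbhd col c v

def colorType (v : V) : ι → Bool :=
  fun c => decide (#(G.colorInNbhd col c v) ≤ #(G.colorOutNbhd col c v))

variable {G col}

lemma card_smallerColorNbhd (c : ι) (v : V) :
    #(G.smallerColorNbhd col c v) = min #(G.colorInNbhd col c v) #(G.colorOutNbhd col c v) := by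
  unfold smallerColorNbhd
  split_ifs with h
  · exact (min_eq_left h).symm
  · exact (min_eq_right (not_le.mp h).le).symm

lemma IsTransitiveColoring.adj_of_mem_colorInNbhd_of_mem_colorOutNbhd
    (hcol : G.IsTransitiveColoring col) {c : ι} {u v w : V} (hu : u ∈ G.colorInNbhd col c v)
    (hw : w ∈ G.colorOutNbhd col c v) : G.Adj u w := by
  simp only [colorInNbhd, colorOutNbhd, mem_filter, mem_univ, true_and] at hu hw
  exact (hcol u v w hu.1 hw.1 (hu.2.trans hw.2.symm)).1

lemma mem_smallerColorNbhd_or_mem_of_colorType_eq {u v : V} (hadj : G.Adj u v)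
    (htype : G.colorType col u = G.colorType col v) :
    u ∈ G.smallerColorNbhd col (col u v) v ∨ v ∈ G.smallerColorNbhd col (col u v) u := by
  have hu : u ∈ G.colorInNbhd col (col u v) v := by simp [colorInNbhd, hadj]
  have hv : v ∈ G.colorOutNbhd col (col u v) u := by simp [colorOutNbhd, hadj]
  have htype' := congrFun htype (col u v)
  simp only [colorType, smallerColorNbhd, decide_eq_decide] at htype' ⊢
  by_cases h : #(G.colorInNbhd col (col u v) v) ≤ #(G.colorOutNbhd col (col u v) v)
  · exact .inl (by rwa [if_pos h])
  · exact .inr (by rwa [if_neg (htype'.not.mpr h)])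

theorem card_le_of_isTransitiveColoring [Fintype ι]
    (hG : ∀ u v, u ≠ v → G.Adj u v ∨ G.Adj v u) (hcol : G.IsTransitiveColoring col) {s : ℕ}
    (hs : ∀ A B : Finset V, (∀ a ∈ A, ∀ b ∈ B, G.Adj a b) → min #A #B ≤ s) :
    Fintype.card V ≤ 2 ^ Fintype.card ι * (2 * (Fintype.card ι * s) + 1) := by
  classical
  by_contra! hlt
  obtain ⟨T, hT⟩ := Fintype.exists_lt_card_fiber_of_mul_lt_card (G.colorType col)
    (by rwa [Fintype.card_fun, Fintype.card_bool])
  refine hT.not_ge (card_le_two_mul_add_one_of_forall_mem_or_mem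
    (N := fun v => univ.biUnion fun c => G.smallerColorNbhd col c v) (fun v _ => ?_) ?_)
  · refine card_biUnion_le_card_mul _ _ _ fun c _ => ?_
    rw [card_smallerColorNbhd]
    exact hs _ _ fun _ hu _ hw => hcol.adj_of_mem_colorInNbhd_of_mem_colorOutNbhd hu hw
  · intro u hu v hv hne
    have htype : G.colorType col u = G.colorType col v :=
      (mem_filter.mp hu).2.trans (mem_filter.mp hv).2.symm
    have hsub (c : ι) (w : V) := subset_biUnion_of_mem (G.smallerColorNbhd col · w) (mem_univ c)
    rcases hG u v hne with h | h
    · exact (mem_smallerColorNbhd_or_mem_of_colorType_eq h htype).imp (hsub _ _ ·) (hsub _ _ ·)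
    · exact (mem_smallerColorNbhd_or_mem_of_colorType_eq h htype.symm).symm.imp
        (hsub _ _ ·) (hsub _ _ ·)

def paley (F : Type*) [Field F] : Digraph F where
  Adj x y := x ≠ y ∧ IsSquare (y - x)

section Paley

variable {F : Type*} [Field F] [Fintype F]

lemma quadraticChar_sub_eq_one_of_paley_adj [DecidableEq F] {x y : F} (h : (paley F).Adj x y) :
    quadraticChar F (y - x) = 1 :=
  (quadraticChar_one_iff_isSquare (sub_ne_zero.mpr h.1.symm)).mpr h.2

lemma paley_adj_or_adj (hF : ¬IsSquare (-1 : F)) {x y : F} (hxy : x ≠ y) :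
    (paley F).Adj x y ∨ (paley F).Adj y x := by
  classical
  refine or_iff_not_imp_left.mpr fun hxy' => ⟨hxy.symm, ?_⟩
  have hyx : ¬IsSquare (y - x) := fun h => hxy' ⟨hxy, h⟩
  rw [← quadraticChar_one_iff_isSquare (sub_ne_zero.mpr hxy), ← neg_sub, neg_eq_neg_one_mul,
    map_mul, quadraticChar_neg_one_iff_not_isSquare.mpr hF,
    quadraticChar_neg_one_iff_not_isSquare.mpr hyx, neg_one_mul, neg_neg]

lemma paley_min_card_le_sqrt (hF : ringChar F ≠ 2) {A B : Finset F}
    (hAB : ∀ a ∈ A, ∀ b ∈ B, (paley F).Adj a b) : min #A #B ≤ Nat.sqrt (Fintype.card F) := by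
  classical
  rw [Nat.le_sqrt]
  calc min #A #B * min #A #B ≤ #A * #B := Nat.mul_le_mul (min_le_left _ _) (min_le_right _ _)
    _ ≤ Fintype.card F := card_mul_card_le_of_quadraticChar_sub_eq_one hF fun a ha b hb =>
      quadraticChar_sub_eq_one_of_paley_adj (hAB a ha b hb)

end Paley

end Digraph

lemma two_pow_mul_lt_of_two_pow_lt {k n : ℕ} (h : 2 ^ (4 * k + 2) < n) :
    2 ^ k * (2 * (k * Nat.sqrt n) + 1) < n := by
  set s := Nat.sqrt n
  have hs : 2 ^ (2 * k + 1) ≤ s := Nat.le_sqrt.mpr <| by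
    rw [← pow_add, show 2 * k + 1 + (2 * k + 1) = 4 * k + 2 by ring]
    exact h.le
  have hs1 : 1 ≤ s := Nat.one_le_two_pow.trans hs
  have hk : k + 1 ≤ 2 ^ k := Nat.lt_two_pow_self
  calc 2 ^ k * (2 * (k * s) + 1) < 2 ^ k * (2 * (k + 1) * s) := by gcongr; nlinarith
    _ ≤ 2 ^ k * (2 * 2 ^ k * s) := by gcongr
    _ = 2 ^ (2 * k + 1) * s := by ring
    _ ≤ s * s := Nat.mul_le_mul_right _ hs
    _ ≤ n := Nat.sqrt_le n

theorem stmt11_general (k : ℕ) (F : Type*) [Field F] [Fintype F]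
    (q : ℕ) (hq : Fintype.card F = q) (h3 : q % 4 = 3)
    (hbig : 2 ^ (4 * k + 2) < q) :
    ¬ ∃ col : F → F → Fin k,
      ∀ a b c : F, (a ≠ b ∧ IsSquare (b - a)) → (b ≠ c ∧ IsSquare (c - b)) →
        col a b = col b c → ((a ≠ c ∧ IsSquare (c - a)) ∧ col a c = col a b) := by
  rintro ⟨col, hcol⟩
  classical
  have hneg : ¬IsSquare (-1 : F) := by
    rw [FiniteField.isSquare_neg_one_iff, hq, not_not]
    exact h3
  have hF : ringChar F ≠ 2 := fun h => hneg (FiniteField.isSquare_of_char_two h _)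
  have hcard := (Digraph.paley F).card_le_of_isTransitiveColoring (col := col)
    (fun _ _ => Digraph.paley_adj_or_adj hneg) hcol fun _ _ => Digraph.paley_min_card_le_sqrt hF
  rw [Fintype.card_fin, hq] at hcard
  exact (two_pow_mul_lt_of_two_pow_lt hbig).not_ge hcard

/-- For a prime power `q ≡ 3 (mod 4)` with `q > 2^(4k+2)`, the Paley tournament
on `GF(q)` admits no transitive `k`-coloring. -/
theorem stmt11 (k : ℕ) (F : Type*) [Field F] [Fintype F] [DecidableEq F]
    (q : ℕ) (hq : Fintype.card F = q) (h3 : q % 4 = 3)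
    (hbig : 2 ^ (4 * k + 2) < q) :
    ¬ ∃ col : F → F → Fin k,
      ∀ a b c : F, (a ≠ b ∧ IsSquare (b - a)) → (b ≠ c ∧ IsSquare (c - b)) →
        col a b = col b c → ((a ≠ c ∧ IsSquare (c - a)) ∧ col a c = col a b) :=
  stmt11_general k F q hq h3 hbig
end

section
/- Suppose a tournament T on q vertices, q > 2^{2k+1}, is edge-colored with k colors. Set ν = 2^{-(2k+2)}, and define the type of a vertex v as the pair (I(v), O(v)) where i ∈ I(v) iff the in-degree of v in color i is at least νq, and i ∈ O(v) iff the out-degree of v in color i is at least νq. Then there exists a vertex w with I(w) ∩ O(w) ≠ ∅. -/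
/-!
Assume no vertex has a color in which both its in- and out-degree reach `νq`. Then the type of a
vertex is determined by the set `I(v)` of colors in which its in-degree is large, and inside one
type class `A` every color has either all in-degrees or all out-degrees below `νq`. Since every
pair of vertices of `A` spans an arc, `|A|(|A|-1)/2 ≤ k|A|νq`, so `|A| ≤ 2kνq + 1`. Summing over
the `2^k` type classes gives `q ≤ 2^k (2kνq + 1)`, which is false for `q > 2^(2k+1)`.
-/

open Finset

section Arcs

variable {V : Type*} (T : V → V → Prop) [DecidableRel T]

theorem card_mul_self_le_card_add_two_mul_card_arcs (htot : ∀ x y, x ≠ y → T x y ∨ T y x)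
    (A : Finset V) : #A * #A ≤ #A + 2 * #{p ∈ A ×ˢ A | T p.1 p.2} := by
  classical
  set arcs := {p ∈ A ×ˢ A | T p.1 p.2}
  have hcover : A ×ˢ A ⊆ A.diag ∪ (arcs ∪ arcs.image Prod.swap) := by
    rintro ⟨u, v⟩ huv
    obtain ⟨hu, hv⟩ := mem_product.mp huv
    by_cases h : u = v
    · subst h; simp [hu]
    · rcases htot u v h with h | h <;> simp [arcs, h, hu, hv]
  calc #A * #A = #(A ×ˢ A) := (card_product A A).symm
    _ ≤ #(A.diag ∪ (arcs ∪ arcs.image Prod.swap)) := card_le_card hcover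
    _ ≤ #A.diag + (#arcs + #(arcs.image Prod.swap)) :=
        (card_union_le _ _).trans (Nat.add_le_add_left (card_union_le _ _) _)
    _ ≤ #A + 2 * #arcs := by rw [diag_card]; linarith [card_image_le (s := arcs) (f := Prod.swap)]

end Arcs

section ColorDegrees

variable {V ι : Type*} [Fintype V] (T : V → V → Prop) [DecidableRel T] (col : V → V → ι)
  [DecidableEq ι]

def colorInDegree (v : V) (i : ι) : ℕ := #{u | T u v ∧ col u v = i}

def colorOutDegree (v : V) (i : ι) : ℕ := #{u | T v u ∧ col v u = i}

theorem card_coloredArcs_le_sum_colorOutDegree (A : Finset V) (i : ι) :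
    #{p ∈ A ×ˢ A | T p.1 p.2 ∧ col p.1 p.2 = i} ≤ ∑ u ∈ A, colorOutDegree T col u i := by
  rw [card_filter, sum_product]
  refine sum_le_sum fun u _ => ?_
  rw [← card_filter]
  exact card_le_card (filter_subset_filter _ (subset_univ A))

theorem card_coloredArcs_le_sum_colorInDegree (A : Finset V) (i : ι) :
    #{p ∈ A ×ˢ A | T p.1 p.2 ∧ col p.1 p.2 = i} ≤ ∑ v ∈ A, colorInDegree T col v i := by
  rw [card_filter, sum_product_right]
  refine sum_le_sum fun v _ => ?_
  rw [← card_filter]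
  exact card_le_card (filter_subset_filter _ (subset_univ A))

theorem card_le_of_forall_colorDegree_le [Fintype ι] (htot : ∀ x y, x ≠ y → T x y ∨ T y x)
    {A : Finset V} {d : ℝ} (hd : 0 ≤ d)
    (hA : ∀ i, (∀ v ∈ A, (colorInDegree T col v i : ℝ) ≤ d) ∨
      ∀ v ∈ A, (colorOutDegree T col v i : ℝ) ≤ d) :
    (#A : ℝ) ≤ 2 * Fintype.card ι * d + 1 := by
  have hcolor : ∀ i, (#{p ∈ A ×ˢ A | T p.1 p.2 ∧ col p.1 p.2 = i} : ℝ) ≤ #A * d := by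
    intro i
    obtain ⟨deg, hle, hdeg⟩ : ∃ deg : V → ℕ,
        #{p ∈ A ×ˢ A | T p.1 p.2 ∧ col p.1 p.2 = i} ≤ ∑ v ∈ A, deg v ∧
          ∀ v ∈ A, (deg v : ℝ) ≤ d := by
      rcases hA i with hin | hout
      exacts [⟨_, card_coloredArcs_le_sum_colorInDegree T col A i, hin⟩,
        ⟨_, card_coloredArcs_le_sum_colorOutDegree T col A i, hout⟩]
    calc (#{p ∈ A ×ˢ A | T p.1 p.2 ∧ col p.1 p.2 = i} : ℝ) ≤ ∑ v ∈ A, (deg v : ℝ) := by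
          exact_mod_cast hle
      _ ≤ #A * d := by simpa using sum_le_card_nsmul A _ d hdeg
  have harcs : (#{p ∈ A ×ˢ A | T p.1 p.2} : ℝ) ≤ Fintype.card ι * (#A * d) := by
    rw [card_eq_sum_card_fiberwise (f := fun p => col p.1 p.2) (t := univ) fun _ _ => mem_univ _]
    push_cast
    simpa [filter_filter] using sum_le_card_nsmul univ _ _ fun i _ => hcolor i
  have hsq : (#A : ℝ) * #A ≤ #A + 2 * #{p ∈ A ×ˢ A | T p.1 p.2} := by
    exact_mod_cast card_mul_self_le_card_add_two_mul_card_arcs T htot A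
  rcases (#A).eq_zero_or_pos with h0 | hpos
  · rw [h0, Nat.cast_zero]; positivity
  · have hpos : (0 : ℝ) < #A := by exact_mod_cast hpos
    refine le_of_mul_le_mul_left ?_ hpos
    linarith

end ColorDegrees

theorem two_pow_mul_lt_of_two_pow_lt_s13 {k : ℕ} {q : ℝ} (hq : 2 ^ (2 * k + 1) < q) :
    2 ^ k * (2 * k * ((2 ^ (2 * k + 2))⁻¹ * q) + 1) < q := by
  have hx : (0 : ℝ) < 2 ^ k := by positivity
  have hk : (k : ℝ) < 2 ^ k := by exact_mod_cast Nat.lt_two_pow_self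
  have hsq : (2 : ℝ) ^ (2 * k + 1) = 2 * 2 ^ k * 2 ^ k := by ring
  have hq0 : 0 < q := lt_trans (by positivity) hq
  have : 2 ^ k * (2 * k * ((2 ^ (2 * k + 2))⁻¹ * q)) = k / 2 ^ k * q / 2 := by
    field_simp
    ring
  rw [mul_add, this, mul_one]
  have h1 : (k : ℝ) / 2 ^ k * q < q :=
    mul_lt_of_lt_one_left hq0 ((div_lt_one hx).mpr hk)
  have h2 : (2 : ℝ) * 2 ^ k ≤ 2 ^ (2 * k + 1) := by
    rw [hsq]
    nlinarith [one_le_pow₀ (M₀ := ℝ) (n := k) one_le_two]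
  linarith

theorem stmt13_general {V : Type*} [Fintype V] (k q : ℕ)
    (hq : Fintype.card V = q) (hbig : 2 ^ (2 * k + 1) < q)
    (T : V → V → Prop) [DecidableRel T]
    (htot : ∀ x y, x ≠ y → T x y ∨ T y x)
    (col : V → V → Fin k) :
    ∃ (w : V) (i : Fin k),
      ((2 : ℝ) ^ (2 * k + 2))⁻¹ * q ≤
        ((Finset.univ.filter fun u => T u w ∧ col u w = i).card : ℝ) ∧
      ((2 : ℝ) ^ (2 * k + 2))⁻¹ * q ≤
        ((Finset.univ.filter fun u => T w u ∧ col w u = i).card : ℝ) := by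
  by_contra! h
  set νq : ℝ := ((2 : ℝ) ^ (2 * k + 2))⁻¹ * q
  let type : V → Finset (Fin k) := fun v => {i | νq ≤ colorInDegree T col v i}
  have hsmallSide (S : Finset (Fin k)) (i : Fin k) :
      (∀ v ∈ ({v | type v = S} : Finset V), (colorInDegree T col v i : ℝ) ≤ νq) ∨
        ∀ v ∈ ({v | type v = S} : Finset V), (colorOutDegree T col v i : ℝ) ≤ νq := by
    have hmem : ∀ v ∈ ({v | type v = S} : Finset V), νq ≤ colorInDegree T col v i ↔ i ∈ S :=
      fun v hv => by simp [← (mem_filter.mp hv).2, type]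
    by_cases hi : i ∈ S
    · exact .inr fun v hv => (h v i ((hmem v hv).mpr hi)).le
    · exact .inl fun v hv => (not_le.mp (mt (hmem v hv).mp hi)).le
  have hclass (S : Finset (Fin k)) : (#{v | type v = S} : ℝ) ≤ 2 * k * νq + 1 := by
    simpa using card_le_of_forall_colorDegree_le T col htot (by positivity) (hsmallSide S)
  have hcount : (q : ℝ) ≤ 2 ^ k * (2 * k * νq + 1) := by
    rw [← hq, ← card_univ, card_eq_sum_card_fiberwise (f := type) (t := univ) fun _ _ => mem_univ _]
    push_cast
    refine (sum_le_card_nsmul univ _ _ fun S _ => hclass S).trans_eq ?_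
    simp [mul_add]
  exact (hcount.trans_lt (two_pow_mul_lt_of_two_pow_lt_s13 (by exact_mod_cast hbig))).false

/-- In a `k`-colored tournament on `q > 2^(2k+1)` vertices there is a vertex `w`
and a color `i` such that both the in-degree and out-degree of `w` in color `i`
are at least `νq` where `ν = 2^{-(2k+2)}`. -/
theorem stmt13 {V : Type*} [Fintype V] [DecidableEq V] (k q : ℕ)
    (hq : Fintype.card V = q) (hbig : 2 ^ (2 * k + 1) < q)
    (T : V → V → Prop) [DecidableRel T]
    (hirr : ∀ v, ¬ T v v)
    (htot : ∀ x y, x ≠ y → T x y ∨ T y x)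
    (hasym : ∀ x y, T x y → ¬ T y x)
    (col : V → V → Fin k) :
    ∃ (w : V) (i : Fin k),
      ((2 : ℝ) ^ (2 * k + 2))⁻¹ * q ≤
        ((Finset.univ.filter fun u => T u w ∧ col u w = i).card : ℝ) ∧
      ((2 : ℝ) ^ (2 * k + 2))⁻¹ * q ≤
        ((Finset.univ.filter fun u => T w u ∧ col w u = i).card : ℝ) :=
  stmt13_general k q hq hbig T htot col
end

section
/- Let H be a hypergraph on a finite set V with fractional transversal number τ* < 2 and shatter function satisfying π_H(n) ≤ (n+1)³ for all n. If integers a = b = 19 satisfy 2^b · (a+b+1)³ < C(a+b, b), then H has a transversal of size at most 19. In particular, since 2^{19}·39³ < C(38,19), such H has transversal number at most 19. -/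
/-!
Draw `a + b` points independently with weights `x` (total weight `σ`). For a `b`-set `I` of
positions, the tuples in which the points at `I` are exactly the points hit by some edge carry weight
at least `σ ^ a`: the `a` points outside `I` are no transversal, so they miss an edge `F`, and the
tuples placing `I` inside `F` weigh `x(F) ^ b ≥ 1` relative to them. A tuple is counted for at most as
many sets `I` as `H` has traces on its at most `a + b` values, so
`C(a + b, b) σ ^ a ≤ T σ ^ (a + b)`, i.e. `C(a + b, b) ≤ T σ ^ b`.
-/
open Finset

section

variable {V ι : Type*} [Fintype ι] [DecidableEq ι]

theorem sum_prod_piFinset_const (x : V → ℝ) (F : Finset V) :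
    ∑ z ∈ Fintype.piFinset fun _ : ι => F, ∏ j, x (z j) = (∑ v ∈ F, x v) ^ Fintype.card ι := by
  rw [← prod_univ_sum, prod_const, card_univ]

theorem sum_prod_eq_pow [Fintype V] (x : V → ℝ) :
    ∑ z : ι → V, ∏ j, x (z j) = (∑ v, x v) ^ Fintype.card ι := by
  rw [← sum_prod_piFinset_const, Fintype.piFinset_univ]

variable [DecidableEq V]

def positionTraces (H : Finset (Finset V)) (z : ι → V) : Finset (Finset ι) :=
  H.image fun F => ({j | z j ∈ F} : Finset ι)

theorem card_positionTraces_le (H : Finset (Finset V)) (z : ι → V) :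
    #(positionTraces H z) ≤ #(H.image (univ.image z ∩ ·)) := by
  have : positionTraces H z =
      (H.image (univ.image z ∩ ·)).image fun t => ({j | z j ∈ t} : Finset ι) := by
    rw [image_image]
    refine image_congr fun F _ => ?_
    simp
  rw [this]
  exact card_image_le

variable [Fintype V] (H : Finset (Finset V)) (x : V → ℝ)

theorem sum_sum_ite_mem_positionTraces_le (hx0 : ∀ v, 0 ≤ x v) (P : Finset (Finset ι)) {T : ℕ}
    (hT : ∀ z : ι → V, #(positionTraces H z) ≤ T) :
    ∑ I ∈ P, ∑ z : ι → V, (if I ∈ positionTraces H z then ∏ j, x (z j) else 0) ≤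
      T * (∑ v, x v) ^ Fintype.card ι := by
  rw [sum_comm, ← sum_prod_eq_pow, mul_sum]
  refine sum_le_sum fun z _ => ?_
  rw [sum_ite_mem, sum_const, nsmul_eq_mul]
  gcongr
  · exact prod_nonneg fun j _ => hx0 _
  · exact_mod_cast (card_le_card inter_subset_right).trans (hT z)

theorem pow_le_sum_ite_mem_positionTraces (hx0 : ∀ v, 0 ≤ x v)
    (hxF : ∀ F ∈ H, 1 ≤ ∑ v ∈ F, x v) (I : Finset ι)
    (hTr : ∀ Tr : Finset V, #Tr ≤ Fintype.card ι - #I → ∃ F ∈ H, Disjoint Tr F) :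
    (∑ v, x v) ^ (Fintype.card ι - #I) ≤
      ∑ z : ι → V, if I ∈ positionTraces H z then ∏ j, x (z j) else 0 := by
  set e := Equiv.piEquivPiSubtypeProd (· ∈ I) fun _ => V
  have he : ∀ u w j, e.symm (u, w) j = if h : j ∈ I then u ⟨j, h⟩ else w ⟨j, h⟩ := fun _ _ _ =>
    Equiv.piEquivPiSubtypeProd_symm_apply _ _ _ _
  have hW : ∀ u w, ∏ j, x (e.symm (u, w) j) = (∏ j, x (u j)) * ∏ j, x (w j) := fun u w => by
    rw [← Fintype.prod_subtype_mul_prod_subtype (· ∈ I)]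
    congr 1
    -- the two sides use different `Fintype I` instances
    · exact prod_congr (by congr; exact Subsingleton.elim _ _) fun j _ => by
        rw [he, dif_pos j.2]
    · exact Fintype.prod_congr _ _ fun j => by rw [he, dif_neg j.2]
  have hcard : Fintype.card {j // j ∉ I} = Fintype.card ι - #I := by
    rw [Fintype.card_subtype_compl, Fintype.card_coe]
  have hw : ∀ w : {j // j ∉ I} → V, ∏ j, x (w j) ≤
      ∑ u, if I ∈ positionTraces H (e.symm (u, w)) then ∏ j, x (e.symm (u, w) j) else 0 := by
    intro w
    obtain ⟨F, hF, hwF⟩ := hTr (univ.image w) (card_image_le.trans (by simp [hcard]))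
    have hmem : ∀ u ∈ Fintype.piFinset fun _ => F, I ∈ positionTraces H (e.symm (u, w)) := by
      intro u hu
      refine mem_image.2 ⟨F, hF, ?_⟩
      ext j
      by_cases hj : j ∈ I
      · simpa [he, hj] using Fintype.mem_piFinset.1 hu ⟨j, hj⟩
      · simpa [he, hj] using disjoint_left.1 hwF (mem_image_of_mem w (mem_univ ⟨j, hj⟩))
    calc ∏ j, x (w j) ≤ (∑ v ∈ F, x v) ^ Fintype.card I * ∏ j, x (w j) :=
          le_mul_of_one_le_left (prod_nonneg fun j _ => hx0 _) (one_le_pow₀ (hxF F hF))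
      _ = ∑ u ∈ Fintype.piFinset fun _ => F, ∏ j, x (e.symm (u, w) j) := by
          simp only [hW, ← sum_mul, sum_prod_piFinset_const]
      _ = ∑ u ∈ Fintype.piFinset fun _ => F,
            if I ∈ positionTraces H (e.symm (u, w)) then ∏ j, x (e.symm (u, w) j) else 0 :=
          sum_congr rfl fun u hu => (if_pos (hmem u hu)).symm
      _ ≤ _ := sum_le_sum_of_subset_of_nonneg (subset_univ _) fun u _ _ => by
          split_ifs
          exacts [prod_nonneg fun j _ => hx0 _, le_rfl]
  calc (∑ v, x v) ^ (Fintype.card ι - #I) = ∑ w : {j // j ∉ I} → V, ∏ j, x (w j) := by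
        rw [sum_prod_eq_pow, hcard]
    _ ≤ _ := sum_le_sum fun w _ => hw w
    _ = _ := by
        rw [sum_comm, ← Fintype.sum_prod_type', ← e.symm.sum_comp]

end

section

variable {V : Type*} [Fintype V] [DecidableEq V] (H : Finset (Finset V)) (x : V → ℝ)

theorem choose_le_mul_sum_pow (hx0 : ∀ v, 0 ≤ x v) (hxF : ∀ F ∈ H, 1 ≤ ∑ v ∈ F, x v)
    {a b T : ℕ} (hTr : ∀ Tr : Finset V, #Tr ≤ a → ∃ F ∈ H, Disjoint Tr F)
    (hT : ∀ S : Finset V, #S ≤ a + b → #(H.image (S ∩ ·)) ≤ T) :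
    ((a + b).choose b : ℝ) ≤ T * (∑ v, x v) ^ b := by
  set σ := ∑ v, x v
  have hσ : 0 < σ := by
    obtain ⟨F, hF, -⟩ := hTr ∅ (by simp)
    exact one_pos.trans_le <| (hxF F hF).trans <|
      sum_le_sum_of_subset_of_nonneg (subset_univ F) fun v _ _ => hx0 v
  have hlower : ∀ I ∈ powersetCard b (univ : Finset (Fin (a + b))), σ ^ a ≤
      ∑ z : Fin (a + b) → V, if I ∈ positionTraces H z then ∏ j, x (z j) else 0 := by
    intro I hI
    have hcard : Fintype.card (Fin (a + b)) - #I = a := by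
      rw [Fintype.card_fin, (mem_powersetCard.1 hI).2, Nat.add_sub_cancel]
    simpa only [hcard] using
      pow_le_sum_ite_mem_positionTraces H x hx0 hxF I fun Tr h => hTr Tr (hcard ▸ h)
  have hupper := sum_sum_ite_mem_positionTraces_le H x hx0
    (powersetCard b (univ : Finset (Fin (a + b)))) fun z =>
    (card_positionTraces_le H z).trans (hT _ (card_image_le.trans (by simp)))
  rw [Fintype.card_fin] at hupper
  have key : (a + b).choose b * σ ^ a ≤ T * σ ^ b * σ ^ a := calc
    _ = ∑ _ ∈ powersetCard b (univ : Finset (Fin (a + b))), σ ^ a := by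
        simp [card_powersetCard]
    _ ≤ _ := sum_le_sum hlower
    _ ≤ T * σ ^ (a + b) := hupper
    _ = _ := by ring
  exact le_of_mul_le_mul_right key (pow_pos hσ a)

theorem exists_transversal_card_le (hx0 : ∀ v, 0 ≤ x v) (hxF : ∀ F ∈ H, 1 ≤ ∑ v ∈ F, x v)
    {a b T : ℕ} {t : ℝ} (hxt : ∑ v, x v ≤ t)
    (hT : ∀ S : Finset V, #S ≤ a + b → #(H.image (S ∩ ·)) ≤ T)
    (hnum : T * t ^ b < (a + b).choose b) :
    ∃ Tr : Finset V, #Tr ≤ a ∧ ∀ F ∈ H, (Tr ∩ F).Nonempty := by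
  by_contra! hTr
  have hchoose := choose_le_mul_sum_pow H x hx0 hxF
    (fun Tr h => (hTr Tr h).imp fun F ⟨hF, hTrF⟩ => ⟨hF, disjoint_iff_inter_eq_empty.2 hTrF⟩) hT
  have : (T : ℝ) * (∑ v, x v) ^ b ≤ T * t ^ b := by
    gcongr
    exact sum_nonneg fun v _ => hx0 v
  linarith

end

/-- Epsilon-net bound: a hypergraph with fractional transversal number less than 2
and shatter function at most `(n+1)³` has a transversal of size at most 19,
provided `2^19 · 39³ < C(38,19)`. -/
theorem stmt17 {V : Type*} [Fintype V] [DecidableEq V]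
    (H : Finset (Finset V))
    (hfrac : ∃ x : V → ℝ, (∀ v, 0 ≤ x v) ∧ (∀ F ∈ H, 1 ≤ ∑ v ∈ F, x v) ∧
      ∑ v, x v < 2)
    (hshatter : ∀ S : Finset V, (H.image fun F => S ∩ F).card ≤ (S.card + 1) ^ 3)
    (hnum : 2 ^ 19 * 39 ^ 3 < Nat.choose 38 19) :
    ∃ Tr : Finset V, Tr.card ≤ 19 ∧ ∀ F ∈ H, (Tr ∩ F).Nonempty := by
  obtain ⟨x, hx0, hxF, hx2⟩ := hfrac
  refine exists_transversal_card_le H x hx0 hxF (b := 19) (T := 39 ^ 3) hx2.le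
    (fun S hS => (hshatter S).trans (Nat.pow_le_pow_left (by omega) 3)) ?_
  rw [mul_comm]
  exact_mod_cast hnum
end
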